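/- arXiv:2303.08015 — 3 statements merged into one kernel-verified Lean document; each statement's English description precedes it below -/
import Mathlib

section
/- Let D, k, q, R₀ be positive real numbers. Then ∫₀^∞ q · ( erf(R₀/(2·√(D·t))) − (R₀/√(π·D·t)) · exp(−R₀²/(4·D·t)) ) · exp(−k·t) dt = (q/(D·k^{3/2})) · ( D·√k − √D · exp(−√(k/D)·R₀) · ( √(D·k) + k·R₀ ) ). -/
/-!
With `a = R₀ / (2√D)` and `u = a / √t` the integrand is `q (erf u - (2/√π) u e^{-u²}) e^{-kt}`.
Completing the square, `(u ± √k √t)² = u² ± 2a√k + kt`, so every Gaussian factor produced by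
differentiating `erf (u ± √k √t)` is a constant multiple of `e^{-u²-kt}`; a suitable combination of
`e^{-kt} erf u`, `erf (u + √k √t)` and `erf (u - √k √t)` is therefore an antiderivative. The
integrand is nonnegative (`(2/√π) x e^{-x²} ≤ erf x` for `x ≥ 0`), so the improper integral is the
difference of the limits of that antiderivative at `∞` and at `0⁺`, both read off from
`erf → ±1` at `±∞`.
-/

open MeasureTheory Real Set

noncomputable def erf (x : ℝ) : ℝ :=
  (2 / Real.sqrt π) * ∫ u in (0 : ℝ)..x, Real.exp (-u ^ 2)

open Filter Topology

theorem hasDerivAt_erf (x : ℝ) : HasDerivAt erf (2 / √π * exp (-x ^ 2)) x :=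
  ((continuous_exp.comp (continuous_pow 2).neg).integral_hasStrictDerivAt 0 x).hasDerivAt.const_mul
    _

theorem continuous_erf : Continuous erf :=
  continuous_iff_continuousAt.2 fun x => (hasDerivAt_erf x).continuousAt

theorem erf_zero : erf 0 = 0 := by simp [erf]

theorem erf_neg (x : ℝ) : erf (-x) = -erf x := by
  have h := intervalIntegral.integral_comp_neg (a := 0) (b := x) fun u => exp (-u ^ 2)
  simp only [neg_sq, neg_zero] at h
  rw [erf, erf, intervalIntegral.integral_symm, ← h]
  ring

theorem tendsto_erf_atTop : Tendsto erf atTop (𝓝 1) := by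
  have hint : IntegrableOn (fun u : ℝ => exp (-u ^ 2)) (Ioi 0) := by
    simpa using (integrable_exp_neg_mul_sq one_pos).integrableOn (s := Ioi 0)
  have hval : ∫ u in Ioi (0 : ℝ), exp (-u ^ 2) = √π / 2 := by
    simpa using integral_gaussian_Ioi 1
  have h := (intervalIntegral_tendsto_integral_Ioi 0 hint tendsto_id).const_mul (2 / √π)
  have hπ : 2 / √π * (√π / 2) = 1 := by field_simp
  rwa [hval, hπ] at h

theorem tendsto_erf_atBot : Tendsto erf atBot (𝓝 (-1)) := by
  simpa [Function.comp_def, erf_neg] using (tendsto_erf_atTop.comp tendsto_neg_atBot_atTop).neg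

theorem mul_exp_neg_sq_le_erf {x : ℝ} (hx : 0 ≤ x) : 2 / √π * x * exp (-x ^ 2) ≤ erf x := by
  have h : ∫ _ in (0 : ℝ)..x, exp (-x ^ 2) ≤ ∫ u in (0 : ℝ)..x, exp (-u ^ 2) :=
    intervalIntegral.integral_mono_on hx intervalIntegrable_const
      ((continuous_exp.comp (continuous_pow 2).neg).intervalIntegrable _ _)
      fun u hu => exp_le_exp.2 (by nlinarith [hu.1, hu.2])
  rw [intervalIntegral.integral_const, smul_eq_mul, sub_zero] at h
  rw [erf, mul_assoc]
  gcongr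

theorem integral_Ioi_of_hasDerivAt_of_nonneg_of_tendsto_nhdsGT {g g' : ℝ → ℝ} {a m l : ℝ}
    (hm : Tendsto g (𝓝[>] a) (𝓝 m)) (hderiv : ∀ x ∈ Ioi a, HasDerivAt g (g' x) x)
    (g'pos : ∀ x ∈ Ioi a, 0 ≤ g' x) (hl : Tendsto g atTop (𝓝 l)) :
    ∫ x in Ioi a, g' x = l - m := by
  have hupdate : ∀ x, a < x → Function.update g a m x = g x := fun x hx =>
    Function.update_of_ne hx.ne' _ _
  have h := integral_Ioi_of_hasDerivAt_of_nonneg (g := Function.update g a m)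
    (continuousWithinAt_update_same.2 (by rwa [Ici_sdiff_left]))
    (fun x hx => (hderiv x hx).congr_of_eventuallyEq <|
      eventually_of_mem (Ioi_mem_nhds hx) fun y hy => hupdate y hy)
    g'pos (hl.congr' <| (eventually_gt_atTop a).mono fun x hx => (hupdate x hx).symm)
  rwa [Function.update_self] at h

theorem hasDerivAt_div_sqrt_add_mul_sqrt (a b : ℝ) {t : ℝ} (ht : 0 < t) :
    HasDerivAt (fun t => a / √t + b * √t) ((b * t - a) / (2 * t * √t)) t := by
  have hs := hasDerivAt_sqrt ht.ne'
  have h := ((hs.inv (sqrt_pos.2 ht).ne').const_mul a).add (hs.const_mul b)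
  simp only [Pi.inv_apply, ← div_eq_mul_inv] at h
  refine h.congr_deriv ?_
  have := sqrt_pos.2 ht
  field_simp
  rw [sq_sqrt ht.le]
  ring

theorem hasDerivAt_erf_div_sqrt_add_mul_sqrt (a b : ℝ) {t : ℝ} (ht : 0 < t) :
    HasDerivAt (fun t => erf (a / √t + b * √t))
      (2 / √π * exp (-(a / √t + b * √t) ^ 2) * ((b * t - a) / (2 * t * √t))) t :=
  (hasDerivAt_erf _).comp t (hasDerivAt_div_sqrt_add_mul_sqrt a b ht)

theorem exp_neg_div_sqrt_add_mul_sqrt_sq (a b : ℝ) {t : ℝ} (ht : 0 < t) :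
    exp (-(a / √t + b * √t) ^ 2) =
      exp (-(2 * a * b)) * exp (-(a / √t) ^ 2) * exp (-(b ^ 2 * t)) := by
  have hexponent : -(a / √t + b * √t) ^ 2 = -(2 * a * b) + -(a / √t) ^ 2 + -(b ^ 2 * t) := by
    have := sqrt_pos.2 ht
    field_simp
    rw [sq_sqrt ht.le]
    ring
  rw [hexponent, exp_add, exp_add]

theorem tendsto_div_sqrt_atTop (a : ℝ) : Tendsto (fun t => a / √t) atTop (𝓝 0) := by
  simpa [div_eq_mul_inv] using tendsto_sqrt_atTop.inv_tendsto_atTop.const_mul a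

theorem tendsto_div_sqrt_add_mul_sqrt_atTop (a : ℝ) {b : ℝ} (hb : 0 < b) :
    Tendsto (fun t => a / √t + b * √t) atTop atTop :=
  (tendsto_div_sqrt_atTop a).add_atTop (tendsto_sqrt_atTop.const_mul_atTop hb)

theorem tendsto_div_sqrt_add_mul_sqrt_atBot (a : ℝ) {b : ℝ} (hb : b < 0) :
    Tendsto (fun t => a / √t + b * √t) atTop atBot :=
  (tendsto_div_sqrt_atTop a).add_atBot (tendsto_sqrt_atTop.const_mul_atTop_of_neg hb)

theorem tendsto_div_sqrt_add_mul_sqrt_nhdsGT_zero {a : ℝ} (ha : 0 < a) (b : ℝ) :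
    Tendsto (fun t => a / √t + b * √t) (𝓝[>] 0) atTop := by
  have hsqrt : Tendsto (fun t => √t) (𝓝[>] 0) (𝓝 0) :=
    (continuous_sqrt.tendsto' 0 0 sqrt_zero).mono_left nhdsWithin_le_nhds
  have hsqrt_pos : Tendsto (fun t => √t) (𝓝[>] 0) (𝓝[>] 0) :=
    tendsto_nhdsWithin_iff.2 ⟨hsqrt, eventually_nhdsWithin_of_forall fun t ht => sqrt_pos.2 ht⟩
  have hdiv : Tendsto (fun t => a / √t) (𝓝[>] 0) atTop := by
    simpa [div_eq_mul_inv] using hsqrt_pos.inv_tendsto_nhdsGT_zero.const_mul_atTop ha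
  simpa using hdiv.atTop_add (hsqrt.const_mul b)

noncomputable def erfLaplaceAntideriv (a k t : ℝ) : ℝ :=
  (-2 * exp (-k * t) * erf (a / √t)
      + (1 - 2 * a * √k) * exp (2 * a * √k) * erf (a / √t + √k * √t)
      + (1 + 2 * a * √k) * exp (-(2 * a * √k)) * erf (a / √t + -√k * √t)) / (2 * k)

theorem hasDerivAt_erfLaplaceAntideriv (a : ℝ) {k : ℝ} (hk : 0 < k) {t : ℝ} (ht : 0 < t) :
    HasDerivAt (erfLaplaceAntideriv a k)
      ((erf (a / √t) - 2 / √π * (a / √t) * exp (-(a / √t) ^ 2)) * exp (-k * t)) t := by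
  have h0 := hasDerivAt_erf_div_sqrt_add_mul_sqrt a 0 ht
  simp only [zero_mul, add_zero, zero_sub] at h0
  have hexp : HasDerivAt (fun t => exp (-k * t)) (exp (-k * t) * -k) t := by
    simpa using ((hasDerivAt_id t).const_mul (-k)).exp
  have h := ((((hexp.const_mul (-2)).mul h0).add
    ((hasDerivAt_erf_div_sqrt_add_mul_sqrt a (√k) ht).const_mul
      ((1 - 2 * a * √k) * exp (2 * a * √k)))).add
    ((hasDerivAt_erf_div_sqrt_add_mul_sqrt a (-√k) ht).const_mul
      ((1 + 2 * a * √k) * exp (-(2 * a * √k))))).div_const (2 * k)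
  refine h.congr_deriv ?_
  rw [exp_neg_div_sqrt_add_mul_sqrt_sq a _ ht, exp_neg_div_sqrt_add_mul_sqrt_sq a _ ht, neg_sq,
    sq_sqrt hk.le, show -(2 * a * -√k) = 2 * a * √k by ring, exp_neg (2 * a * √k)]
  have := sqrt_pos.2 ht
  have := sqrt_pos.2 hk
  field_simp
  rw [sq_sqrt ht.le]
  linear_combination (-4 * a * t * exp (-(a ^ 2 / t))) * mul_self_sqrt hk.le

theorem tendsto_erfLaplaceAntideriv_nhdsGT_zero {a : ℝ} (ha : 0 < a) (k : ℝ) :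
    Tendsto (erfLaplaceAntideriv a k) (𝓝[>] 0)
      (𝓝 ((-2 + (1 - 2 * a * √k) * exp (2 * a * √k)
        + (1 + 2 * a * √k) * exp (-(2 * a * √k))) / (2 * k))) := by
  have hexp : Tendsto (fun t => exp (-k * t)) (𝓝[>] 0) (𝓝 1) :=
    ((continuous_exp.comp (continuous_const.mul continuous_id)).tendsto' 0 1
      (by simp)).mono_left nhdsWithin_le_nhds
  have h0 := tendsto_erf_atTop.comp (tendsto_div_sqrt_add_mul_sqrt_nhdsGT_zero ha 0)
  simp only [Function.comp_def, zero_mul, add_zero] at h0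
  have hp := tendsto_erf_atTop.comp (tendsto_div_sqrt_add_mul_sqrt_nhdsGT_zero ha (√k))
  have hm := tendsto_erf_atTop.comp (tendsto_div_sqrt_add_mul_sqrt_nhdsGT_zero ha (-√k))
  exact ((((hexp.const_mul (-2)).mul h0).add
    (hp.const_mul ((1 - 2 * a * √k) * exp (2 * a * √k)))).add
    (hm.const_mul ((1 + 2 * a * √k) * exp (-(2 * a * √k))))).div_const (2 * k)
    |>.mono_right (congrArg 𝓝 (by ring)).le

theorem tendsto_erfLaplaceAntideriv_atTop (a : ℝ) {k : ℝ} (hk : 0 < k) :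
    Tendsto (erfLaplaceAntideriv a k) atTop
      (𝓝 (((1 - 2 * a * √k) * exp (2 * a * √k)
        - (1 + 2 * a * √k) * exp (-(2 * a * √k))) / (2 * k))) := by
  have hexp : Tendsto (fun t => exp (-k * t)) atTop (𝓝 0) :=
    tendsto_exp_atBot.comp (tendsto_id.const_mul_atTop_of_neg (neg_lt_zero.2 hk))
  have h0 := (continuous_erf.tendsto 0).comp (tendsto_div_sqrt_atTop a)
  rw [erf_zero] at h0
  have hp := tendsto_erf_atTop.comp (tendsto_div_sqrt_add_mul_sqrt_atTop a (sqrt_pos.2 hk))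
  have hm := tendsto_erf_atBot.comp
    (tendsto_div_sqrt_add_mul_sqrt_atBot a (neg_lt_zero.2 (sqrt_pos.2 hk)))
  exact ((((hexp.const_mul (-2)).mul h0).add
    (hp.const_mul ((1 - 2 * a * √k) * exp (2 * a * √k)))).add
    (hm.const_mul ((1 + 2 * a * √k) * exp (-(2 * a * √k))))).div_const (2 * k)
    |>.mono_right (congrArg 𝓝 (by ring)).le

theorem integral_Ioi_erf_div_sqrt_sub_mul_exp {a k : ℝ} (ha : 0 < a) (hk : 0 < k) :
    ∫ t in Ioi 0, (erf (a / √t) - 2 / √π * (a / √t) * exp (-(a / √t) ^ 2)) * exp (-k * t) =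
      (1 - (1 + 2 * a * √k) * exp (-(2 * a * √k))) / k := by
  rw [integral_Ioi_of_hasDerivAt_of_nonneg_of_tendsto_nhdsGT
    (tendsto_erfLaplaceAntideriv_nhdsGT_zero ha k)
    (fun t ht => hasDerivAt_erfLaplaceAntideriv a hk ht)
    (fun t ht => mul_nonneg (sub_nonneg.2 (mul_exp_neg_sq_le_erf (by positivity))) (exp_nonneg _))
    (tendsto_erfLaplaceAntideriv_atTop a hk)]
  field_simp
  ring

theorem erf_sub_mul_exp_div_sqrt_mul (R₀ : ℝ) {D t : ℝ} (hD : 0 < D) (ht : 0 < t) :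
    erf (R₀ / (2 * √(D * t))) - R₀ / √(π * D * t) * exp (-R₀ ^ 2 / (4 * D * t)) =
      erf (R₀ / (2 * √D) / √t)
        - 2 / √π * (R₀ / (2 * √D) / √t) * exp (-(R₀ / (2 * √D) / √t) ^ 2) := by
  have := sqrt_pos.2 hD
  have := sqrt_pos.2 ht
  have := sqrt_pos.2 pi_pos
  have harg : R₀ / (2 * √(D * t)) = R₀ / (2 * √D) / √t := by
    rw [sqrt_mul hD.le, div_div, mul_assoc]
  have hcoeff : R₀ / √(π * D * t) = 2 / √π * (R₀ / (2 * √D) / √t) := by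
    rw [sqrt_mul (by positivity), sqrt_mul pi_pos.le]
    field_simp
  have hgauss : -R₀ ^ 2 / (4 * D * t) = -(R₀ / (2 * √D) / √t) ^ 2 := by
    rw [div_pow, div_pow, mul_pow, sq_sqrt hD.le, sq_sqrt ht.le]
    ring
  rw [harg, hcoeff, hgauss]

theorem passive_rx_self_channel_response_general (D k q R₀ : ℝ)
    (hD : 0 < D) (hk : 0 < k) (hR₀ : 0 < R₀) :
    ∫ t in Ioi (0 : ℝ),
        q * (erf (R₀ / (2 * Real.sqrt (D * t)))
              - R₀ / Real.sqrt (π * D * t) * Real.exp (-R₀ ^ 2 / (4 * D * t)))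
          * Real.exp (-k * t)
      = q / (D * k ^ ((3 : ℝ) / 2)) *
          (D * Real.sqrt k -
            Real.sqrt D * Real.exp (-Real.sqrt (k / D) * R₀) *
              (Real.sqrt (D * k) + k * R₀)) := by
  have hexponent : -(2 * (R₀ / (2 * √D)) * √k) = -√(k / D) * R₀ := by
    rw [sqrt_div hk.le]
    field_simp
  have hk32 : k ^ ((3 : ℝ) / 2) = k * √k := by
    rw [show (3 : ℝ) / 2 = 1 + 1 / 2 by norm_num, rpow_add hk, rpow_one, sqrt_eq_rpow]
  rw [setIntegral_congr_fun measurableSet_Ioi fun t ht => by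
      rw [erf_sub_mul_exp_div_sqrt_mul R₀ hD ht, mul_assoc],
    integral_const_mul, integral_Ioi_erf_div_sqrt_sub_mul_exp (by positivity) hk, hexponent, hk32,
    sqrt_mul hD.le]
  field_simp
  linear_combination (q * exp (-(R₀ * √(k / D))) * (√D * √k + R₀ * k)) * mul_self_sqrt hD.le
    - (q * exp (-(R₀ * √(k / D))) * R₀ * D) * mul_self_sqrt hk.le

/-- Theorem 2 of the paper: asymptotic channel response at a passive spherical
receiver whose center coincides with the continuously emitting point transmitter. -/
theorem passive_rx_self_channel_response (D k q R₀ : ℝ)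
    (hD : 0 < D) (hk : 0 < k) (hq : 0 < q) (hR₀ : 0 < R₀) :
    ∫ t in Ioi (0 : ℝ),
        q * (erf (R₀ / (2 * Real.sqrt (D * t)))
              - R₀ / Real.sqrt (π * D * t) * Real.exp (-R₀ ^ 2 / (4 * D * t)))
          * Real.exp (-k * t)
      = q / (D * k ^ ((3 : ℝ) / 2)) *
          (D * Real.sqrt k -
            Real.sqrt D * Real.exp (-Real.sqrt (k / D) * R₀) *
              (Real.sqrt (D * k) + k * R₀)) :=
  passive_rx_self_channel_response_general D k q R₀ hD hk hR₀
end

section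
/- For all real numbers a ≥ 0 and k > 0, ∫₀^∞ t^{−1/2} · exp(−a²/t − k·t) dt = √(π/k) · exp(−2·a·√k). -/
/-!
Substituting `t = u²` turns the integral into `2 ∫₀^∞ exp (-a²/u² - k u²) du`, and completing the
square with `c = √k` gives `exp (-2ac) ∫₀^∞ exp (-(c u - a/u)²) du`. For this last integral we use
the Cauchy–Schlömilch substitution `w = c u - a/u`, a bijection of `(0, ∞)` onto `ℝ` with
`dw = (c + a/u²) du`: the involution `u ↦ a/(c u)` of `(0, ∞)` flips the sign of `w` and exchanges
the measures `c du` and `(a/u²) du`, so for even `g` both halves contribute equally and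
`∫₀^∞ g (c u - a/u) du = (2c)⁻¹ ∫ g`. With `g w = exp (-w²)` this is `√π / (2c)`.
-/

open MeasureTheory Real Set

section CauchySchlomilch

variable {E : Type*} [NormedAddCommGroup E] [NormedSpace ℝ E] {a c : ℝ}

lemma hasDerivAt_mul_sub_div (a c : ℝ) {u : ℝ} (hu : u ≠ 0) :
    HasDerivAt (fun u ↦ c * u - a / u) (c + a / u ^ 2) u := by
  simp only [div_eq_mul_inv]
  exact (((hasDerivAt_id' u).const_mul c).sub ((hasDerivAt_inv hu).const_mul a)).congr_deriv
    (by ring)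

lemma strictMonoOn_mul_sub_div (ha : 0 ≤ a) (hc : 0 < c) :
    StrictMonoOn (fun u ↦ c * u - a / u) (Ioi 0) := fun x hx y _ hxy ↦ by
  have := div_le_div_of_nonneg_left ha hx hxy.le
  dsimp only
  nlinarith

lemma image_mul_sub_div_Ioi (ha : 0 < a) (hc : 0 < c) :
    (fun u ↦ c * u - a / u) '' Ioi 0 = univ := by
  refine eq_univ_of_forall fun y ↦ ?_
  -- the positive root of `c u² - y u - a`
  set s := √(y ^ 2 + 4 * a * c)
  have hs : s ^ 2 = y ^ 2 + 4 * a * c := sq_sqrt (by positivity)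
  have hys : 0 < y + s := by nlinarith [sqrt_nonneg (y ^ 2 + 4 * a * c), mul_pos ha hc]
  refine ⟨(y + s) / (2 * c), div_pos hys (by positivity), ?_⟩
  field_simp
  linear_combination hs

lemma mul_sub_div_div_mul (ha : a ≠ 0) (hc : c ≠ 0) {u : ℝ} (hu : u ≠ 0) :
    c * (a / (c * u)) - a / (a / (c * u)) = -(c * u - a / u) := by
  field_simp
  ring

lemma image_div_mul_Ioi (ha : 0 < a) (hc : 0 < c) : (fun u ↦ a / (c * u)) '' Ioi 0 = Ioi 0 := by
  refine Subset.antisymm (image_subset_iff.2 fun u hu ↦ ?_) fun v hv ↦ ?_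
  · exact div_pos ha (mul_pos hc hu)
  · refine ⟨a / (c * v), div_pos ha (mul_pos hc hv), ?_⟩
    field_simp [(mem_Ioi.1 hv).ne']

theorem integral_Ioi_mul_add_div_sq_smul_comp_mul_sub_div (ha : 0 < a) (hc : 0 < c) (g : ℝ → E) :
    ∫ u in Ioi 0, (c + a / u ^ 2) • g (c * u - a / u) = ∫ w, g w := by
  rw [← integral_image_eq_integral_deriv_smul_of_monotoneOn measurableSet_Ioi
    (fun u hu ↦ (hasDerivAt_mul_sub_div a c (ne_of_gt hu)).hasDerivWithinAt)
    (strictMonoOn_mul_sub_div ha.le hc).monotoneOn, image_mul_sub_div_Ioi ha hc, setIntegral_univ]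

theorem integrableOn_Ioi_mul_add_div_sq_smul_comp_mul_sub_div (ha : 0 < a) (hc : 0 < c)
    {g : ℝ → E} (hg : Integrable g) :
    IntegrableOn (fun u ↦ (c + a / u ^ 2) • g (c * u - a / u)) (Ioi 0) := by
  rwa [← integrableOn_image_iff_integrableOn_deriv_smul_of_monotoneOn measurableSet_Ioi
    (fun u hu ↦ (hasDerivAt_mul_sub_div a c (ne_of_gt hu)).hasDerivWithinAt)
    (strictMonoOn_mul_sub_div ha.le hc).monotoneOn, image_mul_sub_div_Ioi ha hc, integrableOn_univ]

theorem integrableOn_Ioi_comp_mul_sub_div (ha : 0 < a) (hc : 0 < c) {g : ℝ → E}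
    (hg : Integrable g) : IntegrableOn (fun u ↦ g (c * u - a / u)) (Ioi 0) := by
  have hsum := integrableOn_Ioi_mul_add_div_sq_smul_comp_mul_sub_div ha hc hg
  have hw : ContinuousOn (fun u : ℝ ↦ (c + a / u ^ 2)⁻¹) (Ioi 0) :=
    ContinuousOn.inv₀ (f := fun u : ℝ ↦ c + a / u ^ 2)
      (by fun_prop (disch := intro u (hu : 0 < u); positivity)) fun u (hu : 0 < u) ↦ by positivity
  have hmeas : AEStronglyMeasurable (fun u ↦ g (c * u - a / u)) (volume.restrict (Ioi 0)) := by
    refine ((hw.aestronglyMeasurable measurableSet_Ioi).smul hsum.aestronglyMeasurable).congr ?_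
    filter_upwards [ae_restrict_mem measurableSet_Ioi] with u hu
    rw [Pi.smul_apply', smul_smul, inv_mul_cancel₀ (by positivity), one_smul]
  refine (hsum.norm.const_mul c⁻¹).mono' hmeas ?_
  filter_upwards [ae_restrict_mem measurableSet_Ioi] with u hu
  rw [norm_smul, norm_of_nonneg (by positivity : 0 ≤ c + a / u ^ 2), ← mul_assoc]
  exact le_mul_of_one_le_left (norm_nonneg _)
    ((one_le_inv_mul₀ hc).2 (le_add_of_nonneg_right (by positivity)))

theorem integral_Ioi_div_sq_smul_comp_mul_sub_div (ha : 0 < a) (hc : 0 < c) (g : ℝ → E) :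
    ∫ u in Ioi 0, (a / u ^ 2) • g (c * u - a / u) = c • ∫ u in Ioi 0, g (-(c * u - a / u)) := by
  have hψ' : ∀ u ∈ Ioi (0 : ℝ),
      HasDerivWithinAt (fun u ↦ a / (c * u)) (-(a / (c * u ^ 2))) (Ioi 0) u := by
    intro u hu
    have hu : u ≠ 0 := ne_of_gt hu
    simp only [div_eq_mul_inv]
    exact ((((hasDerivAt_id' u).const_mul c).inv (by positivity)).const_mul a).hasDerivWithinAt
      |>.congr_deriv (by field_simp)
  have hψ_anti : AntitoneOn (fun u ↦ a / (c * u)) (Ioi 0) := fun x hx y _ hxy ↦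
    div_le_div_of_nonneg_left ha.le (mul_pos hc hx) (mul_le_mul_of_nonneg_left hxy hc.le)
  have hsubst := integral_image_eq_integral_deriv_smul_of_antitoneOn measurableSet_Ioi hψ'
    hψ_anti fun v ↦ g (-(c * v - a / v))
  rw [image_div_mul_Ioi ha hc] at hsubst
  rw [hsubst, ← integral_smul]
  refine setIntegral_congr_fun measurableSet_Ioi fun u (hu : 0 < u) ↦ ?_
  simp only [mul_sub_div_div_mul ha.ne' hc.ne' hu.ne', neg_neg, smul_smul]
  congr 1
  field_simp

theorem integral_Ioi_comp_mul_sub_div_of_even (ha : 0 < a) (hc : 0 < c) {g : ℝ → E}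
    (hg_even : ∀ w, g (-w) = g w) (hg : Integrable g) :
    ∫ u in Ioi 0, g (c * u - a / u) = (2 * c)⁻¹ • ∫ w, g w := by
  have hsplit : ∫ u in Ioi 0, (a / u ^ 2) • g (c * u - a / u) =
      (∫ w, g w) - c • ∫ u in Ioi 0, g (c * u - a / u) := by
    have hint : IntegrableOn (fun u ↦ c • g (c * u - a / u)) (Ioi 0) :=
      (integrableOn_Ioi_comp_mul_sub_div ha hc hg).smul c
    rw [← integral_Ioi_mul_add_div_sq_smul_comp_mul_sub_div ha hc, ← integral_smul,
      ← integral_sub (integrableOn_Ioi_mul_add_div_sq_smul_comp_mul_sub_div ha hc hg) hint]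
    congr 1 with u
    rw [add_smul, add_sub_cancel_left]
  rw [integral_Ioi_div_sq_smul_comp_mul_sub_div ha hc] at hsplit
  simp only [hg_even] at hsplit
  rw [eq_sub_iff_add_eq, ← two_smul ℝ, smul_smul] at hsplit
  rw [← hsplit, smul_smul, inv_mul_cancel₀ (by positivity), one_smul]

end CauchySchlomilch

lemma integral_Ioi_exp_neg_sq_mul_sub_div {a c : ℝ} (ha : 0 ≤ a) (hc : 0 < c) :
    ∫ u in Ioi 0, exp (-(c * u - a / u) ^ 2) = √π / (2 * c) := by
  rcases ha.eq_or_lt with rfl | ha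
  · simp_rw [zero_div, sub_zero, mul_pow, ← neg_mul]
    rw [integral_gaussian_Ioi, sqrt_div' _ (sq_nonneg c), sqrt_sq hc.le, div_div, mul_comm c]
  · rw [integral_Ioi_comp_mul_sub_div_of_even ha hc (g := fun w ↦ exp (-w ^ 2)) (by simp)
      (by simpa using integrable_exp_neg_mul_sq one_pos)]
    simpa [div_eq_inv_mul] using congrArg ((2 * c)⁻¹ * ·) (integral_gaussian 1)

lemma exp_neg_sq_div_sub_mul_sq (a c : ℝ) {u : ℝ} (hu : u ≠ 0) :
    exp (-a ^ 2 / u ^ 2 - c ^ 2 * u ^ 2) = exp (-(2 * a * c)) * exp (-(c * u - a / u) ^ 2) := by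
  rw [← exp_add]
  congr 1
  field_simp
  ring

lemma integral_Ioi_rpow_neg_half_smul {E : Type*} [NormedAddCommGroup E] [NormedSpace ℝ E]
    (G : ℝ → E) :
    ∫ t in Ioi 0, t ^ (-(1 : ℝ) / 2) • G t = (2 : ℝ) • ∫ u in Ioi 0, G (u ^ 2) := by
  rw [← integral_comp_rpow_Ioi_of_pos two_pos, ← integral_smul]
  refine setIntegral_congr_fun measurableSet_Ioi fun u (hu : 0 < u) ↦ ?_
  rw [smul_smul, ← rpow_mul hu.le, rpow_two]
  congr 1
  norm_num [mul_assoc, rpow_neg_one, hu.ne']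

/-- Integral identity underlying Theorem 2 and equation (B.2) of the paper. -/
theorem integral_rpow_neg_half_exp (a k : ℝ) (ha : 0 ≤ a) (hk : 0 < k) :
    ∫ t in Ioi (0 : ℝ), t ^ (-(1 : ℝ) / 2) * Real.exp (-a ^ 2 / t - k * t)
      = Real.sqrt (π / k) * Real.exp (-2 * a * Real.sqrt k) := by
  obtain ⟨c, hc, rfl⟩ : ∃ c, 0 < c ∧ c ^ 2 = k := ⟨√k, sqrt_pos.2 hk, sq_sqrt hk.le⟩
  have hsubst := integral_Ioi_rpow_neg_half_smul fun t ↦ exp (-a ^ 2 / t - c ^ 2 * t)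
  simp only [smul_eq_mul] at hsubst
  rw [hsubst, setIntegral_congr_fun measurableSet_Ioi fun u (hu : 0 < u) ↦
    exp_neg_sq_div_sub_mul_sq a c hu.ne', integral_const_mul,
    integral_Ioi_exp_neg_sq_mul_sub_div ha hc, sqrt_div' _ (sq_nonneg c), sqrt_sq hc.le]
  field_simp
end

section
/- For all real numbers a ≥ 0 and k > 0, ∫₀^∞ t^{1/2} · exp(−a²/t − k·t) dt = (√π / (2·k^{3/2})) · (1 + 2·a·√k) · exp(−2·a·√k). -/
/-!
The substitution `t = w² / k` turns the integral into
`2 k^(-3/2) e^(-2b) ∫₀^∞ w² e^(-(w - b/w)²) dw` with `b = a √k`. For `b > 0`, Glasser's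
substitution `u = w - b/w` maps `(0, ∞)` onto `ℝ` with Jacobian `1 + b/w²`, and the inversion
`w ↦ b/w` has Jacobian `b/w²` and leaves `(w - b/w)²` unchanged. Since
`(1 + b/w²)(w - b/w)² = w² + b³/w⁴ - b (1 + b/w²)`, and `b³/w⁴ e^(-(w - b/w)²)` is the
inversion of `w² e^(-(w - b/w)²)`, the Gaussian moments `∫ e^(-u²) = √π` and
`∫ u² e^(-u²) = √π/2` give `2 ∫₀^∞ w² e^(-(w - b/w)²) dw - b √π = √π / 2`.
-/

open MeasureTheory Real Set

section ChangeOfVariables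

variable {E : Type*} [NormedAddCommGroup E] [NormedSpace ℝ E] {b : ℝ}

lemma hasDerivAt_div (b : ℝ) {x : ℝ} (hx : x ≠ 0) :
    HasDerivAt (fun w : ℝ => b / w) (-(b / x ^ 2)) x := by
  simpa only [div_eq_mul_inv, mul_neg] using (hasDerivAt_inv hx).const_mul b

lemma hasDerivAt_sub_div (b : ℝ) {x : ℝ} (hx : x ≠ 0) :
    HasDerivAt (fun w : ℝ => w - b / w) (1 + b / x ^ 2) x := by
  simpa only [sub_neg_eq_add] using (hasDerivAt_id' x).fun_sub (hasDerivAt_div b hx)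

lemma strictMonoOn_sub_div (hb : 0 ≤ b) : StrictMonoOn (fun w : ℝ => w - b / w) (Ioi 0) :=
  fun x hx y _ hxy => show x - b / x < y - b / y by
    linarith [div_le_div_of_nonneg_left hb hx hxy.le]

lemma image_sub_div_Ioi (hb : 0 < b) : (fun w : ℝ => w - b / w) '' Ioi 0 = univ := by
  refine eq_univ_of_forall fun u => ?_
  -- the positive root of `w ^ 2 - u * w - b = 0`
  set s := √(u ^ 2 + 4 * b)
  have hs : s ^ 2 = u ^ 2 + 4 * b := sq_sqrt (by positivity)
  have hus : |u| < s := by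
    rw [← sqrt_sq_eq_abs]; exact sqrt_lt_sqrt (sq_nonneg u) (by linarith)
  have hw : 0 < (u + s) / 2 := by linarith [neg_abs_le u]
  refine ⟨(u + s) / 2, hw, ?_⟩
  have : u + s ≠ 0 := by linarith [neg_abs_le u]
  field_simp
  linear_combination hs

theorem integral_Ioi_one_add_div_sq_smul_comp_sub_div (hb : 0 < b) (f : ℝ → E) :
    ∫ w in Ioi 0, (1 + b / w ^ 2) • f (w - b / w) = ∫ u, f u := by
  rw [← setIntegral_univ (f := f), ← image_sub_div_Ioi hb,
    integral_image_eq_integral_abs_deriv_smul measurableSet_Ioi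
      (fun x hx => (hasDerivAt_sub_div b (ne_of_gt hx)).hasDerivWithinAt)
      (strictMonoOn_sub_div hb.le).injOn]
  refine setIntegral_congr_fun measurableSet_Ioi fun x _ => ?_
  rw [abs_of_pos (by positivity)]

theorem integrableOn_Ioi_one_add_div_sq_smul_comp_sub_div_iff (hb : 0 < b) (f : ℝ → E) :
    IntegrableOn (fun w => (1 + b / w ^ 2) • f (w - b / w)) (Ioi 0) ↔ Integrable f := by
  rw [← integrableOn_univ, ← image_sub_div_Ioi hb,
    integrableOn_image_iff_integrableOn_abs_deriv_smul measurableSet_Ioi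
      (fun x hx => (hasDerivAt_sub_div b (ne_of_gt hx)).hasDerivWithinAt)
      (strictMonoOn_sub_div hb.le).injOn]
  refine integrableOn_congr_fun (fun x _ => ?_) measurableSet_Ioi
  rw [abs_of_pos (by positivity)]

lemma image_div_Ioi (hb : 0 < b) : (fun w : ℝ => b / w) '' Ioi 0 = Ioi 0 := by
  ext y
  refine ⟨?_, fun hy => ⟨b / y, div_pos hb hy, div_div_cancel₀ hb.ne'⟩⟩
  rintro ⟨w, hw, rfl⟩
  exact div_pos hb hw

lemma strictAntiOn_div (hb : 0 < b) : StrictAntiOn (fun w : ℝ => b / w) (Ioi 0) :=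
  fun _ hx _ _ hxy => div_lt_div_of_pos_left hb hx hxy

theorem integral_Ioi_div_sq_smul_comp_div (hb : 0 < b) (f : ℝ → E) :
    ∫ w in Ioi 0, (b / w ^ 2) • f (b / w) = ∫ w in Ioi 0, f w := by
  conv_rhs => rw [← image_div_Ioi hb]
  rw [integral_image_eq_integral_abs_deriv_smul measurableSet_Ioi
      (fun x hx => (hasDerivAt_div b (ne_of_gt hx)).hasDerivWithinAt) (strictAntiOn_div hb).injOn]
  refine setIntegral_congr_fun measurableSet_Ioi fun x (hx : 0 < x) => ?_
  rw [abs_neg, abs_of_pos (by positivity)]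

theorem integrableOn_Ioi_div_sq_smul_comp_div_iff (hb : 0 < b) (f : ℝ → E) :
    IntegrableOn (fun w => (b / w ^ 2) • f (b / w)) (Ioi 0) ↔ IntegrableOn f (Ioi 0) := by
  conv_rhs => rw [← image_div_Ioi hb]
  rw [integrableOn_image_iff_integrableOn_abs_deriv_smul measurableSet_Ioi
      (fun x hx => (hasDerivAt_div b (ne_of_gt hx)).hasDerivWithinAt) (strictAntiOn_div hb).injOn]
  refine integrableOn_congr_fun (fun x (hx : 0 < x) => ?_) measurableSet_Ioi
  rw [abs_neg, abs_of_pos (by positivity)]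

theorem integral_Ioi_smul_comp_sq_div {k : ℝ} (hk : 0 < k) (f : ℝ → E) :
    ∫ w in Ioi 0, (2 * w / k) • f (w ^ 2 / k) = ∫ t in Ioi 0, f t := by
  have himage : (fun w : ℝ => w ^ 2 / k) '' Ioi 0 = Ioi 0 := by
    ext t
    refine ⟨?_, fun (ht : 0 < t) => ⟨√(k * t), sqrt_pos.2 (by positivity), ?_⟩⟩
    · rintro ⟨w, hw, rfl⟩
      exact div_pos (pow_pos hw 2) hk
    · simp only [sq_sqrt (by positivity : 0 ≤ k * t)]
      field_simp
  have hmono : StrictMonoOn (fun w : ℝ => w ^ 2 / k) (Ioi 0) := fun x hx y _ hxy =>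
    div_lt_div_of_pos_right (pow_lt_pow_left₀ hxy (le_of_lt hx) two_ne_zero) hk
  conv_rhs => rw [← himage]
  rw [integral_image_eq_integral_abs_deriv_smul measurableSet_Ioi
      (fun x _ => by simpa using ((hasDerivAt_pow 2 x).div_const k).hasDerivWithinAt)
      hmono.injOn]
  refine setIntegral_congr_fun measurableSet_Ioi fun x (hx : 0 < x) => ?_
  rw [abs_of_pos (by positivity)]

end ChangeOfVariables

lemma integral_Ioi_sq_mul_exp_neg_sq : ∫ x in Ioi (0 : ℝ), x ^ 2 * exp (-x ^ 2) = √π / 4 := by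
  have h := integral_rpow_mul_exp_neg_mul_rpow two_pos (by norm_num : (-1 : ℝ) < 2) one_pos
  have hΓ : Gamma (3 / 2) = √π / 2 := by
    simpa [-one_div, show (1 : ℝ) + 1 / 2 = 3 / 2 by norm_num] using Gamma_nat_add_one_add_half 0
  norm_num [hΓ] at h
  rw [h]
  ring

lemma integral_sq_mul_exp_neg_sq : ∫ x : ℝ, x ^ 2 * exp (-x ^ 2) = √π / 2 := by
  have h := integral_comp_abs (f := fun x : ℝ => x ^ 2 * exp (-x ^ 2))
  simp only [sq_abs] at h
  rw [h, integral_Ioi_sq_mul_exp_neg_sq]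
  ring

lemma integral_exp_neg_sq : ∫ x : ℝ, exp (-x ^ 2) = √π := by
  simpa using integral_gaussian 1

lemma exp_neg_sq_sub_div_le (b : ℝ) {w : ℝ} (hw : 0 < w) :
    exp (-(w - b / w) ^ 2) ≤ exp (2 * b) * exp (-w ^ 2) := by
  rw [← exp_add, exp_le_exp]
  have : w * (b / w) = b := mul_div_cancel₀ b hw.ne'
  nlinarith [sq_nonneg (b / w)]

lemma integrableOn_sq_mul_exp_neg_sq_sub_div (b : ℝ) :
    IntegrableOn (fun w : ℝ => w ^ 2 * exp (-(w - b / w) ^ 2)) (Ioi 0) := by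
  refine Integrable.mono' (((integrable_rpow_mul_exp_neg_mul_sq one_pos
    (by norm_num : (-1 : ℝ) < 2)).const_mul (exp (2 * b))).integrableOn) ?_ ?_
  · exact (by fun_prop : Measurable fun w : ℝ => w ^ 2 * exp (-(w - b / w) ^ 2))
      |>.aestronglyMeasurable
  · filter_upwards [ae_restrict_mem measurableSet_Ioi] with w (hw : 0 < w)
    rw [norm_of_nonneg (by positivity), rpow_two, neg_mul, one_mul, mul_left_comm]
    exact mul_le_mul_of_nonneg_left (exp_neg_sq_sub_div_le b hw) (sq_nonneg w)

theorem integral_sq_mul_exp_neg_sq_sub_div {b : ℝ} (hb : 0 ≤ b) :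
    ∫ w in Ioi 0, w ^ 2 * exp (-(w - b / w) ^ 2) = √π / 4 * (1 + 2 * b) := by
  rcases hb.eq_or_lt with rfl | hb
  · simpa using integral_Ioi_sq_mul_exp_neg_sq
  set F := fun w : ℝ => w ^ 2 * exp (-(w - b / w) ^ 2)
  have hF : IntegrableOn F (Ioi 0) := integrableOn_sq_mul_exp_neg_sq_sub_div b
  have hG : Integrable fun u : ℝ => exp (-u ^ 2) := by
    simpa using integrable_exp_neg_mul_sq one_pos
  have hsplit : EqOn (fun w => (1 + b / w ^ 2) * ((w - b / w) ^ 2 * exp (-(w - b / w) ^ 2)))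
      (fun w => F w + (b / w ^ 2) • F (b / w) - b * ((1 + b / w ^ 2) • exp (-(w - b / w) ^ 2)))
      (Ioi 0) := by
    intro w (hw : 0 < w)
    simp only [F, smul_eq_mul, div_div_cancel₀ hb.ne',
      show (b / w - w) ^ 2 = (w - b / w) ^ 2 by ring]
    field_simp
    ring
  have key := integral_Ioi_one_add_div_sq_smul_comp_sub_div hb fun u => u ^ 2 * exp (-u ^ 2)
  simp only [smul_eq_mul, integral_sq_mul_exp_neg_sq] at key
  rw [setIntegral_congr_fun measurableSet_Ioi hsplit, integral_sub, integral_add,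
    integral_Ioi_div_sq_smul_comp_div hb F, integral_const_mul,
    integral_Ioi_one_add_div_sq_smul_comp_sub_div hb fun u => exp (-u ^ 2),
    integral_exp_neg_sq] at key
  · linarith
  · exact hF
  · exact (integrableOn_Ioi_div_sq_smul_comp_div_iff hb F).2 hF
  · exact hF.add ((integrableOn_Ioi_div_sq_smul_comp_div_iff hb F).2 hF)
  · exact ((integrableOn_Ioi_one_add_div_sq_smul_comp_sub_div_iff hb _).2 hG).const_mul b

/-- Integral identity underlying equation (B.2) of the paper. -/
theorem integral_rpow_half_exp (a k : ℝ) (ha : 0 ≤ a) (hk : 0 < k) :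
    ∫ t in Ioi (0 : ℝ), t ^ ((1 : ℝ) / 2) * Real.exp (-a ^ 2 / t - k * t)
      = Real.sqrt π / (2 * k ^ ((3 : ℝ) / 2)) * (1 + 2 * a * Real.sqrt k) *
          Real.exp (-2 * a * Real.sqrt k) := by
  have hk32 : k ^ ((3 : ℝ) / 2) = k * √k := by
    rw [show (3 : ℝ) / 2 = 1 + 1 / 2 by norm_num, rpow_add hk, rpow_one, ← sqrt_eq_rpow]
  have hsubst : EqOn (fun w => (2 * w / k) •
        ((w ^ 2 / k) ^ ((1 : ℝ) / 2) * exp (-a ^ 2 / (w ^ 2 / k) - k * (w ^ 2 / k))))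
      (fun w => 2 / (k * √k) * exp (-2 * a * √k) * (w ^ 2 * exp (-(w - a * √k / w) ^ 2)))
      (Ioi 0) := by
    intro w (hw : 0 < w)
    have hexp :
        -a ^ 2 / (w ^ 2 / k) - k * (w ^ 2 / k) = -(w - a * √k / w) ^ 2 + -2 * a * √k := by
      field_simp
      linear_combination a ^ 2 * sq_sqrt hk.le
    dsimp only
    rw [smul_eq_mul, ← sqrt_eq_rpow, sqrt_div (sq_nonneg w), sqrt_sq hw.le, hexp, exp_add]
    field_simp
  rw [← integral_Ioi_smul_comp_sq_div hk, setIntegral_congr_fun measurableSet_Ioi hsubst,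
    integral_const_mul, integral_sq_mul_exp_neg_sq_sub_div (by positivity), hk32]
  field_simp
  ring
end
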